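/- arXiv:1405.4981 — 3 statements merged into one kernel-verified Lean document; each statement's English description precedes it below -/
import Mathlib

section
/- Let (X,Y) be distributed over the finite set 𝒳×𝒴 according to a PMF P, let 𝒵 be a nonempty finite set, and let G* be a guessing function for X given Y minimizing E[G(X|Y)^ρ]. Then there exists a function f : 𝒳×𝒴 → 𝒵 such that, with Z = f(X,Y), the minimum over guessing functions for X given (Y,Z) of E[G(X|Y,Z)^ρ] equals E[⌈G*(X|Y)/|𝒵|⌉^ρ]. Moreover, any f with the property that f(x,y) = f(x̃,y) implies ⌈G*(x|y)/|𝒵|⌉ ≠ ⌈G*(x̃|y)/|𝒵|⌉ or x = x̃ has this property, and such an f always exists. -/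
open Real Finset Filter
open scoped Classical

noncomputable section

/-- `G` is a guessing function for `𝒳` given side-information in `W`: for each
side-information value `w`, `x ↦ G x w` is a bijection from `𝒳` onto `{1, …, |𝒳|}`. -/
def IsGuessing {𝒳 W : Type*} [Fintype 𝒳] (G : 𝒳 → W → ℕ) : Prop :=
  ∀ w : W, (Function.Injective fun x => G x w) ∧
    ∀ x, G x w ∈ Finset.Icc 1 (Fintype.card 𝒳)

/-- `P` is a probability mass function on `𝒳 × 𝒴` (written in curried form). -/
def IsPMF {𝒳 𝒴 : Type*} [Fintype 𝒳] [Fintype 𝒴] (P : 𝒳 → 𝒴 → ℝ) : Prop :=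
  (∀ x y, 0 ≤ P x y) ∧ ∑ x, ∑ y, P x y = 1

/-- `Q` is a conditional PMF on `M` given `(x, y)`. -/
def IsCondPMF {𝒳 𝒴 M : Type*} [Fintype M] (Q : 𝒳 → 𝒴 → M → ℝ) : Prop :=
  ∀ x y, (∀ m, 0 ≤ Q x y m) ∧ ∑ m, Q x y m = 1

/-- Conditional Rényi entropy of order `α` (base-2 logarithms). -/
def condRenyi {𝒳 𝒴 : Type*} [Fintype 𝒳] [Fintype 𝒴] (α : ℝ) (P : 𝒳 → 𝒴 → ℝ) : ℝ :=
  (α / (1 - α)) * Real.logb 2 (∑ y, (∑ x, P x y ^ α) ^ (1 / α))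

/-- Bob's guessing ambiguity: the least `ρ`-th guessing moment over guessing
functions for `X` given `(Y, M₁, M₂)`. -/
def bobGuessAmb {𝒳 𝒴 M₁ M₂ : Type*} [Fintype 𝒳] [Fintype 𝒴] [Fintype M₁] [Fintype M₂]
    (ρ : ℝ) (P : 𝒳 → 𝒴 → ℝ) (Q : 𝒳 → 𝒴 → M₁ × M₂ → ℝ) : ℝ :=
  sInf { e | ∃ G : 𝒳 → 𝒴 × M₁ × M₂ → ℕ, IsGuessing G ∧
    e = ∑ x, ∑ y, ∑ m : M₁ × M₂, P x y * Q x y m * (G x (y, m) : ℝ) ^ ρ }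

/-- Eve's ambiguity: the least `ρ`-th moment of the minimum of two guessing
functions, one for `X` given `(Y, M₁)` and one for `X` given `(Y, M₂)`. -/
def eveAmb {𝒳 𝒴 M₁ M₂ : Type*} [Fintype 𝒳] [Fintype 𝒴] [Fintype M₁] [Fintype M₂]
    (ρ : ℝ) (P : 𝒳 → 𝒴 → ℝ) (Q : 𝒳 → 𝒴 → M₁ × M₂ → ℝ) : ℝ :=
  sInf { e | ∃ G₁ : 𝒳 → 𝒴 × M₁ → ℕ, ∃ G₂ : 𝒳 → 𝒴 × M₂ → ℕ,
    IsGuessing G₁ ∧ IsGuessing G₂ ∧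
    e = ∑ x, ∑ y, ∑ m : M₁ × M₂, P x y * Q x y m *
      ((min (G₁ x (y, m.1)) (G₂ x (y, m.2)) : ℕ) : ℝ) ^ ρ }

/-- Bob's list ambiguity: the `ρ`-th moment of the size of the list of all `x`
with positive posterior probability given `(Y, M₁, M₂)`. -/
def bobListAmb {𝒳 𝒴 M₁ M₂ : Type*} [Fintype 𝒳] [Fintype 𝒴] [Fintype M₁] [Fintype M₂]
    (ρ : ℝ) (P : 𝒳 → 𝒴 → ℝ) (Q : 𝒳 → 𝒴 → M₁ × M₂ → ℝ) : ℝ :=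
  ∑ x, ∑ y, ∑ m : M₁ × M₂, P x y * Q x y m *
    ((Finset.univ.filter fun x' => 0 < P x' y * Q x' y m).card : ℝ) ^ ρ
/-- ceiling division helper -/
def cdiv (N g : ℕ) : ℕ := (g - 1) / N + 1

lemma cdiv_mono (N : ℕ) : Monotone (cdiv N) := fun a b h =>
  Nat.add_le_add_right (Nat.div_le_div_right (Nat.sub_le_sub_right h 1)) 1

lemma one_le_cdiv (N g : ℕ) : 1 ≤ cdiv N g := Nat.le_add_left 1 _

lemma cdiv_le_self (N g : ℕ) (hN : 0 < N) (hg : 1 ≤ g) : cdiv N g ≤ g := by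
  have : (g - 1) / N ≤ g - 1 := Nat.div_le_self _ _
  unfold cdiv; omega

lemma cdiv_le_of_le_mul {N g h : ℕ} (hN : 0 < N) (hg : 1 ≤ g) (hle : g ≤ N * h) :
    cdiv N g ≤ h := by
  have h1 : (g - 1) / N < h := by
    rw [Nat.div_lt_iff_lt_mul hN]
    calc g - 1 < N * h := by omega
    _ = h * N := Nat.mul_comm _ _
  unfold cdiv; omega

lemma ceil_div_eq (N g : ℕ) (hN : 0 < N) (hg : 1 ≤ g) :
    ⌈(g : ℝ) / (N : ℝ)⌉ = (cdiv N g : ℤ) := by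
  have hN' : (0:ℝ) < N := by exact_mod_cast hN
  set q := (g - 1) / N with hq
  have hq1 : N * q ≤ g - 1 := Nat.mul_div_le _ _ |>.trans_eq rfl
  have hq1' : N * q ≤ g - 1 := by rw [hq]; exact Nat.mul_div_le _ _
  have hmod := Nat.div_add_mod (g - 1) N
  have hmlt : (g - 1) % N < N := Nat.mod_lt _ hN
  have hq2 : g ≤ N * q + N := by
    set t := N * q with ht
    omega
  rw [Int.ceil_eq_iff]
  have hcast : ((cdiv N g : ℤ) : ℝ) = (q : ℝ) + 1 := by
    unfold cdiv; push_cast; rw [hq]; norm_cast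
  constructor
  · rw [hcast]
    have : (q : ℝ) * N < g := by
      have : (N * q : ℕ) < g := by omega
      calc (q : ℝ) * N = ((N * q : ℕ) : ℝ) := by push_cast; ring
      _ < g := by exact_mod_cast this
    linarith [(lt_div_iff₀ hN').mpr this]
  · rw [hcast]
    have : (g : ℝ) ≤ ((q : ℝ) + 1) * N := by
      have : (g : ℕ) ≤ N * (q + 1) := by
        set t := N * q with ht
        have : N * (q + 1) = t + N := by rw [ht]; ring
        omega
      calc (g : ℝ) ≤ ((N * (q+1) : ℕ) : ℝ) := by exact_mod_cast this
      _ = ((q : ℝ) + 1) * N := by push_cast; ring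
    exact (div_le_iff₀ hN').mpr this

lemma extend_inj {α : Type*} [Fintype α] (s : Finset α) (φ : α → ℕ)
    (hinj : Set.InjOn φ s) (hmem : ∀ x ∈ s, φ x ∈ Finset.Icc 1 (Fintype.card α)) :
    ∃ G : α → ℕ, Function.Injective G ∧ (∀ x, G x ∈ Finset.Icc 1 (Fintype.card α)) ∧
      ∀ x ∈ s, G x = φ x := by
  classical
  have himg : (s.image φ).card = s.card := Finset.card_image_of_injOn hinj
  have hsub : s.image φ ⊆ Finset.Icc 1 (Fintype.card α) := by
    intro m hm
    obtain ⟨x, hx, rfl⟩ := Finset.mem_image.mp hm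
    exact hmem x hx
  have hcard : (Finset.univ \ s).card =
      ((Finset.Icc 1 (Fintype.card α)) \ s.image φ).card := by
    rw [Finset.card_sdiff_of_subset (Finset.subset_univ s), Finset.card_sdiff_of_subset hsub, himg,
      Finset.card_univ, Nat.card_Icc]
    omega
  let e := Finset.equivOfCardEq hcard
  have hmem' : ∀ a (ha : a ∉ s),
      (e ⟨a, by simp [ha]⟩ : ℕ) ∈ (Finset.Icc 1 (Fintype.card α)) \ s.image φ :=
    fun a ha => (e ⟨a, by simp [ha]⟩).2
  refine ⟨fun x => if hx : x ∈ s then φ x else (e ⟨x, by simp [hx]⟩ : ℕ), ?_, ?_, ?_⟩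
  · intro a b hab
    dsimp only at hab
    by_cases ha : a ∈ s <;> by_cases hb : b ∈ s
    · rw [dif_pos ha, dif_pos hb] at hab
      exact hinj (Finset.mem_coe.mpr ha) (Finset.mem_coe.mpr hb) hab
    · rw [dif_pos ha, dif_neg hb] at hab
      exfalso
      have h1 : φ a ∈ s.image φ := Finset.mem_image_of_mem φ ha
      have h2 := hmem' b hb
      rw [Finset.mem_sdiff] at h2
      rw [hab] at h1
      exact h2.2 h1
    · rw [dif_neg ha, dif_pos hb] at hab
      exfalso
      have h1 : φ b ∈ s.image φ := Finset.mem_image_of_mem φ hb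
      have h2 := hmem' a ha
      rw [Finset.mem_sdiff] at h2
      rw [← hab] at h1
      exact h2.2 h1
    · rw [dif_neg ha, dif_neg hb] at hab
      have : (⟨a, by simp [ha]⟩ : {x // x ∈ Finset.univ \ s}) = ⟨b, by simp [hb]⟩ :=
        e.injective (Subtype.ext hab)
      exact congrArg Subtype.val this
  · intro x
    dsimp only
    by_cases hx : x ∈ s
    · rw [dif_pos hx]; exact hmem x hx
    · rw [dif_neg hx]
      exact (Finset.mem_sdiff.mp (hmem' x hx)).1
  · intro x hx
    dsimp only
    rw [dif_pos hx]

lemma exists_rank {α : Type*} [Fintype α] (N : ℕ) (H : α → ℕ)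
    (h1 : ∀ x, 1 ≤ H x)
    (hfib : ∀ m, (Finset.univ.filter fun x => H x = m).card ≤ N) :
    ∃ R : α → ℕ, Function.Injective R ∧ (∀ x, R x ∈ Finset.Icc 1 (Fintype.card α)) ∧
      ∀ x, R x ≤ N * H x := by
  classical
  cases isEmpty_or_nonempty α with
  | inl h => exact ⟨fun _ => 1, fun a => (h.false a).elim, fun x => (h.false x).elim,
      fun x => (h.false x).elim⟩
  | inr h =>
  have hn : 0 < Fintype.card α := Fintype.card_pos
  set n := Fintype.card α with hn'
  set τ : α → ℕ := fun x => ((Fintype.equivFin α) x : ℕ) with hτdef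
  have hτlt : ∀ x, τ x < n := fun x => ((Fintype.equivFin α) x).2
  have hτinj : Function.Injective τ := fun a b hab => by
    have : (Fintype.equivFin α) a = (Fintype.equivFin α) b := Fin.ext hab
    exact (Fintype.equivFin α).injective this
  set K : α → ℕ := fun x => n * H x + τ x with hKdef
  have hKinj : Function.Injective K := by
    intro a b hab
    have hH : H a = H b := by
      have h1 := congrArg (· / n) hab
      simp only [hKdef] at h1
      rwa [Nat.mul_add_div hn, Nat.mul_add_div hn, Nat.div_eq_of_lt (hτlt a),
        Nat.div_eq_of_lt (hτlt b), Nat.add_zero, Nat.add_zero] at h1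
    have hτ : τ a = τ b := by
      simp only [hKdef, hH] at hab
      exact Nat.add_left_cancel hab
    exact hτinj hτ
  have hKmono : ∀ a b, K a < K b → H a ≤ H b := by
    intro a b hab
    by_contra hh
    push_neg at hh
    have : K b < K a := by
      calc K b = n * H b + τ b := rfl
      _ < n * H b + n := by have := hτlt b; omega
      _ = n * (H b + 1) := by ring
      _ ≤ n * H a := Nat.mul_le_mul_left _ hh
      _ ≤ n * H a + τ a := Nat.le_add_right _ _
    omega
  set R : α → ℕ := fun x => (Finset.univ.filter fun x' => K x' < K x).card + 1 with hRdef
  have hRmonoK : ∀ a b, K a < K b → R a < R b := by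
    intro a b hab
    have hsub : (Finset.univ.filter fun x' => K x' < K a) ⊂
        (Finset.univ.filter fun x' => K x' < K b) := by
      constructor
      · intro x hx
        simp only [Finset.mem_filter, Finset.mem_univ, true_and] at hx ⊢
        omega
      · intro hsub
        have ha : a ∈ (Finset.univ.filter fun x' => K x' < K b) := by
          simp [hab]
        have := hsub ha
        simp at this
    exact Nat.add_lt_add_right (Finset.card_lt_card hsub) 1
  refine ⟨R, ?_, ?_, ?_⟩
  · intro a b hab
    by_contra hne
    have hK : K a ≠ K b := fun h => hne (hKinj h)
    rcases lt_or_gt_of_ne hK with h | h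
    · exact absurd hab (Nat.ne_of_lt (hRmonoK a b h))
    · exact absurd hab.symm (Nat.ne_of_lt (hRmonoK b a h))
  · intro x
    rw [Finset.mem_Icc]
    refine ⟨Nat.le_add_left _ _, ?_⟩
    have hsub : (Finset.univ.filter fun x' => K x' < K x) ⊆ Finset.univ.erase x := by
      intro x' hx'
      simp only [Finset.mem_filter, Finset.mem_univ, true_and] at hx'
      refine Finset.mem_erase.mpr ⟨?_, Finset.mem_univ _⟩
      rintro rfl; omega
    have := Finset.card_le_card hsub
    rw [Finset.card_erase_of_mem (Finset.mem_univ x), Finset.card_univ] at this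
    simp only [hRdef]
    omega
  · intro x
    have hnotmem : x ∉ (Finset.univ.filter fun x' => K x' < K x) := by simp
    have hsub : insert x (Finset.univ.filter fun x' => K x' < K x) ⊆
        Finset.univ.filter fun x' => H x' ≤ H x := by
      intro x' hx'
      rcases Finset.mem_insert.mp hx' with rfl | hx'
      · simp
      · simp only [Finset.mem_filter, Finset.mem_univ, true_and] at hx' ⊢
        exact hKmono _ _ hx'
    have h2 : R x ≤ (Finset.univ.filter fun x' => H x' ≤ H x).card := by
      have := Finset.card_le_card hsub
      rw [Finset.card_insert_of_notMem hnotmem] at this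
      simpa only [hRdef] using this
    have h3 : (Finset.univ.filter fun x' => H x' ≤ H x) ⊆
        (Finset.Icc 1 (H x)).biUnion fun m => Finset.univ.filter fun x' => H x' = m := by
      intro x' hx'
      simp only [Finset.mem_filter, Finset.mem_univ, true_and] at hx'
      exact Finset.mem_biUnion.mpr ⟨H x', Finset.mem_Icc.mpr ⟨h1 x', hx'⟩, by simp⟩
    have h4 : ((Finset.Icc 1 (H x)).biUnion fun m =>
        Finset.univ.filter fun x' => H x' = m).card ≤ H x * N := by
      calc _ ≤ ∑ m ∈ Finset.Icc 1 (H x), (Finset.univ.filter fun x' => H x' = m).card :=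
          Finset.card_biUnion_le
      _ ≤ ∑ _m ∈ Finset.Icc 1 (H x), N := Finset.sum_le_sum fun m _ => hfib m
      _ = (Finset.Icc 1 (H x)).card * N := by rw [Finset.sum_const, smul_eq_mul]
      _ = H x * N := by rw [Nat.card_Icc, Nat.add_sub_cancel]
    calc R x ≤ (Finset.univ.filter fun x' => H x' ≤ H x).card := h2
    _ ≤ _ := Finset.card_le_card h3
    _ ≤ H x * N := h4
    _ = N * H x := Nat.mul_comm _ _

lemma gopt_antitone {𝒳 𝒴 : Type*} [Fintype 𝒳] [Fintype 𝒴]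
    (ρ : ℝ) (hρ : 0 < ρ) (P : 𝒳 → 𝒴 → ℝ)
    (Gopt : 𝒳 → 𝒴 → ℕ) (hGopt : IsGuessing Gopt)
    (hGoptMin : ∀ G' : 𝒳 → 𝒴 → ℕ, IsGuessing G' →
      ∑ x, ∑ y, P x y * (Gopt x y : ℝ) ^ ρ ≤ ∑ x, ∑ y, P x y * (G' x y : ℝ) ^ ρ)
    {x x' : 𝒳} {y : 𝒴} (h : Gopt x y < Gopt x' y) : P x' y ≤ P x y := by
  classical
  by_contra hlt
  push_neg at hlt
  have hxx : x ≠ x' := fun h' => by subst h'; exact lt_irrefl _ h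
  set G' : 𝒳 → 𝒴 → ℕ := fun a b => if b = y then Gopt (Equiv.swap x x' a) b else Gopt a b
    with hG'def
  have hG'guess : IsGuessing G' := by
    intro w
    by_cases hw : w = y
    · subst hw
      constructor
      · intro a a' haa'
        simp only [hG'def, if_pos rfl] at haa'
        exact (Equiv.swap x x').injective ((hGopt w).1 haa')
      · intro a
        simp only [hG'def, if_pos rfl]
        exact (hGopt w).2 _
    · constructor
      · intro a a' haa'
        simp only [hG'def, if_neg hw] at haa'
        exact (hGopt w).1 haa'
      · intro a
        simp only [hG'def, if_neg hw]
        exact (hGopt w).2 _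
  have hle := hGoptMin G' hG'guess
  have h1 : ∀ a : 𝒳, ∑ b, (P a b * (G' a b : ℝ) ^ ρ - P a b * (Gopt a b : ℝ) ^ ρ) =
      P a y * ((G' a y : ℝ) ^ ρ - (Gopt a y : ℝ) ^ ρ) := by
    intro a
    rw [Finset.sum_eq_single_of_mem y (Finset.mem_univ y)]
    · ring
    · intro b _ hb
      simp only [hG'def, if_neg hb]
      ring
  have h2 : ∑ a, P a y * ((G' a y : ℝ) ^ ρ - (Gopt a y : ℝ) ^ ρ) =
      P x y * ((Gopt x' y : ℝ) ^ ρ - (Gopt x y : ℝ) ^ ρ) +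
      P x' y * ((Gopt x y : ℝ) ^ ρ - (Gopt x' y : ℝ) ^ ρ) := by
    rw [← Finset.sum_subset (Finset.subset_univ ({x, x'} : Finset 𝒳))]
    · rw [Finset.sum_pair hxx]
      simp only [hG'def, if_pos rfl, Equiv.swap_apply_left, Equiv.swap_apply_right]
    · intro a _ ha
      simp only [Finset.mem_insert, Finset.mem_singleton, not_or] at ha
      simp only [hG'def, if_pos rfl, Equiv.swap_apply_of_ne_of_ne ha.1 ha.2]
      ring
  have hdiff : ∑ a, ∑ b, P a b * (G' a b : ℝ) ^ ρ - ∑ a, ∑ b, P a b * (Gopt a b : ℝ) ^ ρ =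
      (P x y - P x' y) * ((Gopt x' y : ℝ) ^ ρ - (Gopt x y : ℝ) ^ ρ) := by
    rw [← Finset.sum_sub_distrib]
    simp_rw [← Finset.sum_sub_distrib]
    rw [Finset.sum_congr rfl fun a _ => h1 a, h2]
    ring
  have hA : (Gopt x y : ℝ) ^ ρ < (Gopt x' y : ℝ) ^ ρ := by
    apply Real.rpow_lt_rpow (Nat.cast_nonneg _) _ hρ
    exact_mod_cast h
  nlinarith [hle, hdiff, hA, hlt]

lemma rearr {𝒳 : Type*} [Fintype 𝒳] (ρ : ℝ) (hρ : 0 < ρ)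
    (p : 𝒳 → ℝ) (g r : 𝒳 → ℕ)
    (hg_inj : Function.Injective g) (hg_mem : ∀ x, g x ∈ Finset.Icc 1 (Fintype.card 𝒳))
    (hr_inj : Function.Injective r) (hr_mem : ∀ x, r x ∈ Finset.Icc 1 (Fintype.card 𝒳))
    (hanti : ∀ x x', g x < g x' → p x' ≤ p x)
    (φ : ℕ → ℕ) (hφ : Monotone φ) :
    ∑ x, p x * (φ (g x) : ℝ) ^ ρ ≤ ∑ x, p x * (φ (r x) : ℝ) ^ ρ := by
  classical
  set n := Fintype.card 𝒳 with hn
  have hcard : Fintype.card 𝒳 = Fintype.card (Finset.Icc 1 n : Finset ℕ) := by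
    rw [Fintype.card_coe, Nat.card_Icc]
    omega
  have hgbij : Function.Bijective (fun x => (⟨g x, hg_mem x⟩ : (Finset.Icc 1 n : Finset ℕ))) := by
    rw [Fintype.bijective_iff_injective_and_card]
    exact ⟨fun a b hab => hg_inj (congrArg Subtype.val hab), hcard⟩
  have hrbij : Function.Bijective (fun x => (⟨r x, hr_mem x⟩ : (Finset.Icc 1 n : Finset ℕ))) := by
    rw [Fintype.bijective_iff_injective_and_card]
    exact ⟨fun a b hab => hr_inj (congrArg Subtype.val hab), hcard⟩
  set eg := Equiv.ofBijective _ hgbij with heg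
  set er := Equiv.ofBijective _ hrbij with her
  set σ : Equiv.Perm 𝒳 := er.trans eg.symm with hσ
  have hgs : ∀ x, g (σ x) = r x := by
    intro x
    have : eg (σ x) = er x := by
      simp only [hσ, Equiv.trans_apply, Equiv.apply_symm_apply]
    have := congrArg Subtype.val this
    simpa [heg, her, Equiv.ofBijective_apply] using this
  have hant : Antivary p (fun x => (φ (g x) : ℝ) ^ ρ) := by
    intro i j hij
    dsimp only at hij
    rcases le_or_gt (g j) (g i) with hji | hji
    · exfalso
      have : (φ (g j) : ℝ) ^ ρ ≤ (φ (g i) : ℝ) ^ ρ :=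
        Real.rpow_le_rpow (Nat.cast_nonneg _) (Nat.cast_le.mpr (hφ hji)) hρ.le
      linarith
    · exact hanti _ _ hji
  have := hant.sum_smul_le_sum_smul_comp_perm (σ := σ)
  simp only [smul_eq_mul] at this
  calc ∑ x, p x * (φ (g x) : ℝ) ^ ρ ≤ ∑ x, p x * (φ (g (σ x)) : ℝ) ^ ρ := this
  _ = ∑ x, p x * (φ (r x) : ℝ) ^ ρ := by
      apply Finset.sum_congr rfl
      intro x _
      rw [hgs x]


theorem sideInfo_improves_guessing_equality
    {𝒳 𝒴 𝒵 : Type*} [Fintype 𝒳] [Fintype 𝒴] [Fintype 𝒵]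
    [Nonempty 𝒳] [Nonempty 𝒴] [Nonempty 𝒵]
    (ρ : ℝ) (hρ : 0 < ρ) (P : 𝒳 → 𝒴 → ℝ) (hP : IsPMF P)
    (Gopt : 𝒳 → 𝒴 → ℕ) (hGopt : IsGuessing Gopt)
    (hGoptMin : ∀ G' : 𝒳 → 𝒴 → ℕ, IsGuessing G' →
      ∑ x, ∑ y, P x y * (Gopt x y : ℝ) ^ ρ ≤
        ∑ x, ∑ y, P x y * (G' x y : ℝ) ^ ρ) :
    (∃ f : 𝒳 × 𝒴 → 𝒵, ∀ x x' y, f (x, y) = f (x', y) →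
      ⌈(Gopt x y : ℝ) / (Fintype.card 𝒵 : ℝ)⌉ ≠
        ⌈(Gopt x' y : ℝ) / (Fintype.card 𝒵 : ℝ)⌉ ∨ x = x') ∧
    (∀ f : 𝒳 × 𝒴 → 𝒵,
      (∀ x x' y, f (x, y) = f (x', y) →
        ⌈(Gopt x y : ℝ) / (Fintype.card 𝒵 : ℝ)⌉ ≠
          ⌈(Gopt x' y : ℝ) / (Fintype.card 𝒵 : ℝ)⌉ ∨ x = x') →
      sInf { e | ∃ G : 𝒳 → 𝒴 × 𝒵 → ℕ, IsGuessing G ∧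
          e = ∑ x, ∑ y, P x y * (G x (y, f (x, y)) : ℝ) ^ ρ } =
        ∑ x, ∑ y, P x y *
          ((⌈(Gopt x y : ℝ) / (Fintype.card 𝒵 : ℝ)⌉ : ℝ)) ^ ρ) ∧
    (∃ f : 𝒳 × 𝒴 → 𝒵,
      sInf { e | ∃ G : 𝒳 → 𝒴 × 𝒵 → ℕ, IsGuessing G ∧
          e = ∑ x, ∑ y, P x y * (G x (y, f (x, y)) : ℝ) ^ ρ } =
        ∑ x, ∑ y, P x y *
          ((⌈(Gopt x y : ℝ) / (Fintype.card 𝒵 : ℝ)⌉ : ℝ)) ^ ρ) := by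
  classical
  set N := Fintype.card 𝒵 with hNdef
  have hN : 0 < N := Fintype.card_pos
  have hGmem : ∀ x y, Gopt x y ∈ Finset.Icc 1 (Fintype.card 𝒳) := fun x y => (hGopt y).2 x
  have hG1 : ∀ x y, 1 ≤ Gopt x y := fun x y => (Finset.mem_Icc.mp (hGmem x y)).1
  have hceil : ∀ x y, ⌈(Gopt x y : ℝ) / (N : ℝ)⌉ = (cdiv N (Gopt x y) : ℤ) :=
    fun x y => ceil_div_eq N _ hN (hG1 x y)
  -- Part 1 : existence of a good f
  have hf0 : ∃ f : 𝒳 × 𝒴 → 𝒵, ∀ x x' y, f (x, y) = f (x', y) →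
      ⌈(Gopt x y : ℝ) / (N : ℝ)⌉ ≠ ⌈(Gopt x' y : ℝ) / (N : ℝ)⌉ ∨ x = x' := by
    refine ⟨fun p => (Fintype.equivFin 𝒵).symm ⟨(Gopt p.1 p.2 - 1) % N, Nat.mod_lt _ hN⟩, ?_⟩
    intro x x' y hf
    by_cases hc : ⌈(Gopt x y : ℝ) / (N : ℝ)⌉ = ⌈(Gopt x' y : ℝ) / (N : ℝ)⌉
    · right
      have hmod : (Gopt x y - 1) % N = (Gopt x' y - 1) % N := by
        have h' := (Fintype.equivFin 𝒵).symm.injective hf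
        exact congrArg Fin.val (by exact_mod_cast h')
      have hdiv : (Gopt x y - 1) / N = (Gopt x' y - 1) / N := by
        rw [hceil, hceil] at hc
        have hc' : cdiv N (Gopt x y) = cdiv N (Gopt x' y) := by exact_mod_cast hc
        unfold cdiv at hc'
        omega
      have hgg : Gopt x y = Gopt x' y := by
        have h1 := Nat.div_add_mod (Gopt x y - 1) N
        have h2 := Nat.div_add_mod (Gopt x' y - 1) N
        have h3 : Gopt x y - 1 = Gopt x' y - 1 := by
          rw [← h1, ← h2, hdiv, hmod]
        have e1 := hG1 x y
        have e2 := hG1 x' y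
        omega
      exact (hGopt y).1 hgg
    · left; exact hc
  -- Part 2
  have key : ∀ f : 𝒳 × 𝒴 → 𝒵,
      (∀ x x' y, f (x, y) = f (x', y) →
        ⌈(Gopt x y : ℝ) / (N : ℝ)⌉ ≠ ⌈(Gopt x' y : ℝ) / (N : ℝ)⌉ ∨ x = x') →
      sInf { e | ∃ G : 𝒳 → 𝒴 × 𝒵 → ℕ, IsGuessing G ∧
          e = ∑ x, ∑ y, P x y * (G x (y, f (x, y)) : ℝ) ^ ρ } =
        ∑ x, ∑ y, P x y * ((⌈(Gopt x y : ℝ) / (N : ℝ)⌉ : ℝ)) ^ ρ := by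
    intro f hprop
    have hVeq : ∑ x, ∑ y, P x y * ((⌈(Gopt x y : ℝ) / (N : ℝ)⌉ : ℝ)) ^ ρ =
        ∑ x, ∑ y, P x y * ((cdiv N (Gopt x y) : ℝ)) ^ ρ := by
      refine Finset.sum_congr rfl fun x _ => Finset.sum_congr rfl fun y _ => ?_
      rw [hceil x y]
      norm_cast
    rw [hVeq]
    -- construct the optimal guessing function G₀
    have hcmem : ∀ x y, cdiv N (Gopt x y) ∈ Finset.Icc 1 (Fintype.card 𝒳) := by
      intro x y
      rw [Finset.mem_Icc]
      exact ⟨one_le_cdiv N _,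
        (cdiv_le_self N _ hN (hG1 x y)).trans (Finset.mem_Icc.mp (hGmem x y)).2⟩
    have hex : ∀ w : 𝒴 × 𝒵, ∃ Gw : 𝒳 → ℕ, Function.Injective Gw ∧
        (∀ x, Gw x ∈ Finset.Icc 1 (Fintype.card 𝒳)) ∧
        ∀ x ∈ Finset.univ.filter (fun x => f (x, w.1) = w.2), Gw x = cdiv N (Gopt x w.1) := by
      intro w
      apply extend_inj
      · intro a ha b hb hab
        rw [Finset.mem_coe, Finset.mem_filter] at ha hb
        rcases hprop a b w.1 (ha.2.trans hb.2.symm) with hne | heq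
        · exfalso
          apply hne
          rw [hceil, hceil]
          exact_mod_cast hab
        · exact heq
      · intro x _
        exact hcmem x w.1
    choose Gw hGw1 hGw2 hGw3 using hex
    have hG₀guess : IsGuessing (fun x (w : 𝒴 × 𝒵) => Gw w x) := fun w => ⟨hGw1 w, fun x => hGw2 w x⟩
    have hG₀val : ∀ x y, Gw (y, f (x, y)) x = cdiv N (Gopt x y) := fun x y =>
      hGw3 (y, f (x, y)) x (by simp)
    have hmemV : (∑ x, ∑ y, P x y * ((cdiv N (Gopt x y) : ℝ)) ^ ρ) ∈
        { e | ∃ G : 𝒳 → 𝒴 × 𝒵 → ℕ, IsGuessing G ∧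
          e = ∑ x, ∑ y, P x y * (G x (y, f (x, y)) : ℝ) ^ ρ } := by
      refine ⟨fun x w => Gw w x, hG₀guess, ?_⟩
      refine Finset.sum_congr rfl fun x _ => Finset.sum_congr rfl fun y _ => ?_
      dsimp only
      rw [hG₀val x y]
    -- lower bound
    have hlb : ∀ e ∈ { e | ∃ G : 𝒳 → 𝒴 × 𝒵 → ℕ, IsGuessing G ∧
          e = ∑ x, ∑ y, P x y * (G x (y, f (x, y)) : ℝ) ^ ρ },
        (∑ x, ∑ y, P x y * ((cdiv N (Gopt x y) : ℝ)) ^ ρ) ≤ e := by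
      rintro e ⟨G, hG, rfl⟩
      rw [Finset.sum_comm]
      conv_rhs => rw [Finset.sum_comm]
      apply Finset.sum_le_sum
      intro y _
      set H : 𝒳 → ℕ := fun x => G x (y, f (x, y)) with hHdef
      have hH1 : ∀ x, 1 ≤ H x := fun x => (Finset.mem_Icc.mp ((hG (y, f (x, y))).2 x)).1
      have hfib : ∀ m, (Finset.univ.filter fun x => H x = m).card ≤ N := by
        intro m
        have hc : (Finset.univ.filter fun x => H x = m).card ≤ (Finset.univ : Finset 𝒵).card := by
          apply Finset.card_le_card_of_injOn (fun x => f (x, y)) (fun _ _ => Finset.mem_univ _)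
          intro a ha b hb hab
          rw [Finset.mem_coe, Finset.mem_filter] at ha hb
          have hHab : H a = H b := ha.2.trans hb.2.symm
          have hGab : G a (y, f (a, y)) = G b (y, f (a, y)) := by
            simpa only [hHdef, hab] using hHab
          exact (hG (y, f (a, y))).1 hGab
        simpa [hNdef, Finset.card_univ] using hc
      obtain ⟨R, hRinj, hRmem, hRle⟩ := exists_rank N H hH1 hfib
      have step1 : ∑ x, P x y * (cdiv N (Gopt x y) : ℝ) ^ ρ ≤
          ∑ x, P x y * (cdiv N (R x) : ℝ) ^ ρ :=
        rearr ρ hρ (fun x => P x y) (fun x => Gopt x y) R (hGopt y).1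
          (fun x => hGmem x y) hRinj hRmem
          (fun a b hab => gopt_antitone ρ hρ P Gopt hGopt hGoptMin hab)
          (cdiv N) (cdiv_mono N)
      have step2 : ∑ x, P x y * (cdiv N (R x) : ℝ) ^ ρ ≤ ∑ x, P x y * (H x : ℝ) ^ ρ := by
        apply Finset.sum_le_sum
        intro x _
        apply mul_le_mul_of_nonneg_left _ (hP.1 x y)
        apply Real.rpow_le_rpow (Nat.cast_nonneg _) _ hρ.le
        have hR1 : 1 ≤ R x := (Finset.mem_Icc.mp (hRmem x)).1
        exact_mod_cast cdiv_le_of_le_mul hN hR1 (hRle x)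
      exact step1.trans step2
    exact le_antisymm (csInf_le ⟨_, fun e he => hlb e he⟩ hmemV) (le_csInf ⟨_, hmemV⟩ hlb)
  obtain ⟨f0, hf0p⟩ := hf0
  exact ⟨⟨f0, hf0p⟩, key, ⟨f0, key f0 hf0p⟩⟩
end
end

section
/- Let (X,Y) be distributed over the finite set 𝒳×𝒴 according to a PMF P and let 𝒵 be a nonempty finite set. There exists a function f : 𝒳×𝒴 → 𝒵 such that, with Z = f(X,Y), min over guessing functions for X given (Y,Z) of E[G(X|Y,Z)^ρ] < 1 + 2^ρ · |𝒵|^{−ρ} · (min over guessing functions for X given Y of E[G(X|Y)^ρ]). -/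
open Real Finset Filter
open scoped Classical

noncomputable section

/-- ranking by an injective key gives a guessing function -/
lemma rank_guessing {𝒳 W : Type*} [Fintype 𝒳] [Nonempty 𝒳] (key : 𝒳 → W → ℕ)
    (hinj : ∀ w, Function.Injective fun x => key x w) :
    IsGuessing (fun x w => 1 + (Finset.univ.filter fun x' => key x' w < key x w).card) := by
  intro w
  constructor
  · intro x1 x2 h
    have hcard : (Finset.univ.filter fun x' => key x' w < key x1 w).card =
        (Finset.univ.filter fun x' => key x' w < key x2 w).card := by
      simpa using h
    rcases lt_trichotomy (key x1 w) (key x2 w) with hlt | heq | hlt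
    · exfalso
      have hss : (Finset.univ.filter fun x' => key x' w < key x1 w) ⊂
          (Finset.univ.filter fun x' => key x' w < key x2 w) := by
        constructor
        · intro a ha
          simp only [Finset.mem_filter, Finset.mem_univ, true_and] at ha ⊢
          exact ha.trans hlt
        · intro hsub
          have hx1 : x1 ∈ (Finset.univ.filter fun x' => key x' w < key x2 w) := by
            simp [hlt]
          have := hsub hx1
          simp at this
      exact absurd (Finset.card_lt_card hss) (by omega)
    · exact hinj w heq
    · exfalso
      have hss : (Finset.univ.filter fun x' => key x' w < key x2 w) ⊂
          (Finset.univ.filter fun x' => key x' w < key x1 w) := by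
        constructor
        · intro a ha
          simp only [Finset.mem_filter, Finset.mem_univ, true_and] at ha ⊢
          exact ha.trans hlt
        · intro hsub
          have hx2 : x2 ∈ (Finset.univ.filter fun x' => key x' w < key x1 w) := by
            simp [hlt]
          have := hsub hx2
          simp at this
      exact absurd (Finset.card_lt_card hss) (by omega)
  · intro x
    simp only [Finset.mem_Icc]
    constructor
    · omega
    · have hsub : (Finset.univ.filter fun x' => key x' w < key x w) ⊆
          Finset.univ.erase x := by
        intro a ha
        simp only [Finset.mem_filter, Finset.mem_univ, true_and] at ha
        refine Finset.mem_erase.2 ⟨?_, Finset.mem_univ a⟩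
        rintro rfl; omega
      have h1 := Finset.card_le_card hsub
      have h2 : (Finset.univ.erase x).card = Fintype.card 𝒳 - 1 := by
        rw [Finset.card_erase_of_mem (Finset.mem_univ x), Finset.card_univ]
      have h3 : 0 < Fintype.card 𝒳 := Fintype.card_pos
      omega

lemma rank_le_key {𝒳 W : Type*} [Fintype 𝒳] (key : 𝒳 → W → ℕ)
    (hinj : ∀ w, Function.Injective fun x => key x w) (x : 𝒳) (w : W) :
    1 + (Finset.univ.filter fun x' => key x' w < key x w).card ≤ 1 + key x w := by
  have : (Finset.univ.filter fun x' => key x' w < key x w).card ≤ key x w := by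
    calc (Finset.univ.filter fun x' => key x' w < key x w).card
        ≤ (Finset.range (key x w)).card :=
          Finset.card_le_card_of_injOn (fun x' => key x' w)
            (fun a ha => Finset.mem_range.2 (Finset.mem_filter.1 ha).2)
            (fun a _ b _ hab => hinj w hab)
      _ = key x w := Finset.card_range _
  omega

/-- numeric bound -/
lemma ceil_bound (g K : ℕ) (hg : 1 ≤ g) (hK : 1 ≤ K) :
    (((g - 1) / K + 1 : ℕ) : ℝ) ≤ max 1 (2 * (g:ℝ) / K) := by
  rcases le_or_gt g K with h | h
  · have : (g - 1) / K = 0 := Nat.div_eq_of_lt (by omega)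
    rw [this]
    exact le_trans (by norm_num) (le_max_left 1 (2 * (g:ℝ) / K))
  · refine le_trans ?_ (le_max_right _ _)
    have hK0 : (0:ℝ) < K := by exact_mod_cast hK
    have h1 : (((g-1)/K : ℕ) : ℝ) ≤ ((g-1 : ℕ) : ℝ) / K := Nat.cast_div_le
    have h2 : ((g - 1 : ℕ) : ℝ) = (g : ℝ) - 1 := by
      have h' : ((g - 1 : ℕ) : ℝ) = (g : ℝ) - ((1:ℕ):ℝ) := Nat.cast_sub hg
      simpa using h'
    have h3 : (g:ℝ) - 1 + K ≤ 2 * g := by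
      have : (K:ℝ) ≤ g := by exact_mod_cast h.le
      linarith [this]
    have e : (((g-1)/K : ℕ):ℝ) ≤ ((g:ℝ)-1)/K := by rw [← h2]; exact h1
    have e2 : (((g-1)/K : ℕ):ℝ) * K ≤ (g:ℝ) - 1 := (le_div_iff₀ hK0).1 e
    push_cast
    rw [le_div_iff₀ hK0]
    nlinarith [e2]

lemma keybound (ρ : ℝ) (hρ : 0 < ρ) (K g r : ℕ) (hK : 1 ≤ K) (hg : 1 ≤ g)
    (hr : r ≤ (g - 1) / K + 1) :
    (r : ℝ) ^ ρ ≤ 1 - min 1 ((2:ℝ) ^ ρ * (K:ℝ) ^ (-ρ)) +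
      (2:ℝ) ^ ρ * (K:ℝ) ^ (-ρ) * (g:ℝ) ^ ρ := by
  set c : ℝ := (2:ℝ) ^ ρ * (K:ℝ) ^ (-ρ) with hc
  have hK0 : (0:ℝ) < K := by exact_mod_cast hK
  have hg0 : (1:ℝ) ≤ g := by exact_mod_cast hg
  have h1 : (r:ℝ) ≤ max 1 (2 * (g:ℝ) / K) :=
    le_trans (by exact_mod_cast hr) (ceil_bound g K hg hK)
  have h2 : (r:ℝ) ^ ρ ≤ (max 1 (2 * (g:ℝ) / K)) ^ ρ :=
    Real.rpow_le_rpow (Nat.cast_nonneg r) h1 hρ.le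
  have ht0 : (0:ℝ) ≤ 2 * (g:ℝ) / K := by positivity
  have h4 : ((2 * (g:ℝ) / K)) ^ ρ = c * (g:ℝ) ^ ρ := by
    rw [hc, Real.div_rpow (by positivity) hK0.le, Real.mul_rpow (by norm_num) (by positivity),
      Real.rpow_neg hK0.le]
    ring
  have h3 : (max 1 (2 * (g:ℝ) / K)) ^ ρ ≤ max 1 (c * (g:ℝ) ^ ρ) := by
    rcases le_total (1:ℝ) (2 * (g:ℝ) / K) with ht | ht
    · rw [max_eq_right ht, h4]
      exact le_max_right _ _
    · rw [max_eq_left ht, Real.one_rpow]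
      exact le_max_left _ _
  have h5 : max 1 (c * (g:ℝ)^ρ) + min 1 (c * (g:ℝ)^ρ) = 1 + c * (g:ℝ)^ρ := max_add_min _ _
  have h6 : min 1 c ≤ min 1 (c * (g:ℝ)^ρ) := by
    refine min_le_min le_rfl ?_
    have : (1:ℝ) ≤ (g:ℝ)^ρ := Real.one_le_rpow hg0 hρ.le
    nlinarith [Real.rpow_natCast ((2:ℝ)), hc ▸ (by positivity : (0:ℝ) < c)]
  linarith

theorem sideInfo_improves_guessing_achievability
    {𝒳 𝒴 𝒵 : Type*} [Fintype 𝒳] [Fintype 𝒴] [Fintype 𝒵]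
    [Nonempty 𝒳] [Nonempty 𝒴] [Nonempty 𝒵]
    (ρ : ℝ) (hρ : 0 < ρ) (P : 𝒳 → 𝒴 → ℝ) (hP : IsPMF P) :
    ∃ f : 𝒳 × 𝒴 → 𝒵,
      sInf { e | ∃ G : 𝒳 → 𝒴 × 𝒵 → ℕ, IsGuessing G ∧
          e = ∑ x, ∑ y, P x y * (G x (y, f (x, y)) : ℝ) ^ ρ } <
        1 + 2 ^ ρ * (Fintype.card 𝒵 : ℝ) ^ (-ρ) *
          sInf { e | ∃ G : 𝒳 → 𝒴 → ℕ, IsGuessing G ∧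
            e = ∑ x, ∑ y, P x y * (G x y : ℝ) ^ ρ } := by
  classical
  obtain ⟨hP0, hP1⟩ := hP
  set n := Fintype.card 𝒳 with hn
  set K := Fintype.card 𝒵 with hKdef
  have hK : 1 ≤ K := Fintype.card_pos
  have hK0 : (0:ℝ) < K := by exact_mod_cast hK
  set c : ℝ := 2 ^ ρ * (K:ℝ) ^ (-ρ) with hc
  have hcpos : 0 < c := by rw [hc]; positivity
  set δ : ℝ := min 1 c with hδdef
  have hδpos : 0 < δ := lt_min one_pos hcpos
  set SY := { e | ∃ G : 𝒳 → 𝒴 → ℕ, IsGuessing G ∧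
      e = ∑ x, ∑ y, P x y * (G x y : ℝ) ^ ρ } with hSY
  have hSYne : SY.Nonempty := by
    refine ⟨_, fun x _ => (Fintype.equivFin 𝒳 x : ℕ) + 1, fun w => ⟨?_, ?_⟩, rfl⟩
    · intro a b hab
      simp only at hab
      exact (Fintype.equivFin 𝒳).injective (Fin.ext (by omega))
    · intro x
      have := (Fintype.equivFin 𝒳 x).isLt
      simp only [Finset.mem_Icc]
      omega
  have hSYbdd : BddBelow SY := by
    refine ⟨0, ?_⟩
    rintro e ⟨G, hG, rfl⟩
    exact Finset.sum_nonneg fun x _ => Finset.sum_nonneg fun y _ =>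
      mul_nonneg (hP0 x y) (Real.rpow_nonneg (Nat.cast_nonneg _) _)
  obtain ⟨eG, heGmem, heG⟩ := (csInf_lt_iff hSYbdd hSYne).1
    (lt_add_of_pos_right (sInf SY) (by positivity : (0:ℝ) < δ / (2 * c)))
  obtain ⟨G, hG, rfl⟩ := heGmem
  have hGmem : ∀ x y, 1 ≤ G x y ∧ G x y ≤ n :=
    fun x y => Finset.mem_Icc.1 ((hG y).2 x)
  set e𝒵 := Fintype.equivFin 𝒵 with he𝒵
  set f : 𝒳 × 𝒴 → 𝒵 :=
    fun p => e𝒵.symm ⟨(G p.1 p.2 - 1) % K, Nat.mod_lt _ hK⟩ with hf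
  refine ⟨f, ?_⟩
  set key : 𝒳 → 𝒴 × 𝒵 → ℕ := fun x w =>
    if (G x w.1 - 1) % K = (e𝒵 w.2 : ℕ) then (G x w.1 - 1) / K else n + G x w.1 with hkey
  have hkeyinj : ∀ w, Function.Injective fun x => key x w := by
    rintro ⟨y, z⟩ x1 x2 h
    simp only [hkey] at h
    have h1 := hGmem x1 y
    have h2 := hGmem x2 y
    have hd1 := Nat.div_add_mod (G x1 y - 1) K
    have hd2 := Nat.div_add_mod (G x2 y - 1) K
    have hs1 := Nat.div_le_self (G x1 y - 1) K
    have hs2 := Nat.div_le_self (G x2 y - 1) K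
    by_cases c1 : (G x1 y - 1) % K = (e𝒵 z : ℕ) <;>
      by_cases c2 : (G x2 y - 1) % K = (e𝒵 z : ℕ) <;>
      simp only [c1, c2, eq_self_iff_true, if_true, if_false] at h
    · have hmod : (G x1 y - 1) % K = (G x2 y - 1) % K := c1.trans c2.symm
      have heq : G x1 y - 1 = G x2 y - 1 := by
        conv_lhs => rw [← Nat.div_add_mod (G x1 y - 1) K]
        conv_rhs => rw [← Nat.div_add_mod (G x2 y - 1) K]
        rw [h, hmod]
      exact (hG y).1 (show G x1 y = G x2 y by omega)
    · have h3 : (G x1 y - 1) / K ≤ n - 1 := hs1.trans (by omega)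
      have h4 : n - 1 < n + G x2 y := by
        have : (0:ℕ) < n := Fintype.card_pos
        omega
      exact absurd h (Nat.ne_of_lt (h3.trans_lt h4))
    · have h3 : (G x2 y - 1) / K ≤ n - 1 := hs2.trans (by omega)
      have h4 : n - 1 < n + G x1 y := by
        have : (0:ℕ) < n := Fintype.card_pos
        omega
      exact absurd h (Nat.ne_of_gt (h3.trans_lt h4))
    · exact (hG y).1 (show G x1 y = G x2 y by omega)
  set G' : 𝒳 → 𝒴 × 𝒵 → ℕ :=
    fun x w => 1 + (Finset.univ.filter fun x' => key x' w < key x w).card with hG'def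
  have hG' : IsGuessing G' := rank_guessing key hkeyinj
  have hbnd : ∀ x y, G' x (y, f (x, y)) ≤ (G x y - 1) / K + 1 := by
    intro x y
    have hz : (e𝒵 (f (x, y)) : ℕ) = (G x y - 1) % K := by
      simp [hf]
    have hkx : key x (y, f (x, y)) = (G x y - 1) / K := by
      simp only [hkey]
      rw [if_pos hz.symm]
    have hrk := rank_le_key key hkeyinj x (y, f (x, y))
    simp only [hG'def]
    exact hrk.trans (by rw [hkx, Nat.add_comm])
  have hSfbdd : BddBelow { e | ∃ G : 𝒳 → 𝒴 × 𝒵 → ℕ, IsGuessing G ∧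
      e = ∑ x, ∑ y, P x y * (G x (y, f (x, y)) : ℝ) ^ ρ } := by
    refine ⟨0, ?_⟩
    rintro e ⟨Gg, hGg, rfl⟩
    exact Finset.sum_nonneg fun x _ => Finset.sum_nonneg fun y _ =>
      mul_nonneg (hP0 x y) (Real.rpow_nonneg (Nat.cast_nonneg _) _)
  have hle : sInf { e | ∃ G : 𝒳 → 𝒴 × 𝒵 → ℕ, IsGuessing G ∧
      e = ∑ x, ∑ y, P x y * (G x (y, f (x, y)) : ℝ) ^ ρ } ≤
      ∑ x, ∑ y, P x y * (G' x (y, f (x, y)) : ℝ) ^ ρ :=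
    csInf_le hSfbdd ⟨G', hG', rfl⟩
  have hterm : ∀ x y, (G' x (y, f (x, y)) : ℝ) ^ ρ ≤ 1 - δ + c * (G x y : ℝ) ^ ρ := by
    intro x y
    have := keybound ρ hρ K (G x y) (G' x (y, f (x, y))) hK (hGmem x y).1 (hbnd x y)
    rw [← hc, ← hδdef] at this
    exact this
  have hsum : (∑ x, ∑ y, P x y * (G' x (y, f (x, y)) : ℝ) ^ ρ) ≤
      (1 - δ) + c * (∑ x, ∑ y, P x y * (G x y : ℝ) ^ ρ) := by
    calc ∑ x, ∑ y, P x y * (G' x (y, f (x, y)) : ℝ) ^ ρ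
        ≤ ∑ x, ∑ y, P x y * (1 - δ + c * (G x y : ℝ) ^ ρ) := by
          refine Finset.sum_le_sum fun x _ => Finset.sum_le_sum fun y _ => ?_
          exact mul_le_mul_of_nonneg_left (hterm x y) (hP0 x y)
      _ = (1 - δ) * (∑ x, ∑ y, P x y) + c * (∑ x, ∑ y, P x y * (G x y : ℝ) ^ ρ) := by
          rw [Finset.mul_sum, Finset.mul_sum, ← Finset.sum_add_distrib]
          refine Finset.sum_congr rfl fun x _ => ?_
          rw [Finset.mul_sum, Finset.mul_sum, ← Finset.sum_add_distrib]
          refine Finset.sum_congr rfl fun y _ => ?_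
          ring
      _ = (1 - δ) + c * (∑ x, ∑ y, P x y * (G x y : ℝ) ^ ρ) := by rw [hP1, mul_one]
  have hfin : (1 - δ) + c * (∑ x, ∑ y, P x y * (G x y : ℝ) ^ ρ) < 1 + c * sInf SY := by
    have h1 : c * (∑ x, ∑ y, P x y * (G x y : ℝ) ^ ρ) < c * (sInf SY + δ / (2 * c)) :=
      mul_lt_mul_of_pos_left heG hcpos
    have h2 : c * (sInf SY + δ / (2 * c)) = c * sInf SY + δ / 2 := by
      field_simp
    linarith
  exact lt_of_le_of_lt (hle.trans hsum) hfin
end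
end

section
/- Let (X,Y,Z) be distributed over the finite set 𝒳×𝒴×𝒵 according to a PMF P. Then min over guessing functions for X given (Y,Z) of E[G(X|Y,Z)^ρ] ≥ max( |𝒵|^{−ρ} · (min over guessing functions for X given Y of E[G(X|Y)^ρ]), 1 ). -/
open Real Finset Filter
open scoped Classical

noncomputable section

/-!
Let `G` guess `X` given `(Y, Z)`. Guessing `X` given `Y` alone in increasing order of
`m(x, y) = min_z G(x | y, z)` (ties broken arbitrarily) puts `x` at position at most
`#{x' | m(x', y) ≤ m(x, y)} ≤ |𝒵| · m(x, y)`, because for each `z` at most `m` values of `x'`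
satisfy `G(x' | y, z) ≤ m`. Hence `G'(x | y) ≤ |𝒵| · G(x | y, z)` for every `z`, and averaging the
`ρ`-th powers gives `E[G'(X|Y)^ρ] ≤ |𝒵|^ρ · E[G(X|Y,Z)^ρ]`. The bound by `1` holds as `G ≥ 1`.
-/

theorem injective_card_filter_le {𝒳 α : Type*} [Fintype 𝒳] [LinearOrder α] {K : 𝒳 → α}
    (hK : Function.Injective K) : Function.Injective fun x => #{x' | K x' ≤ K x} := by
  have hlt : ∀ {a b}, K a < K b → #{x' | K x' ≤ K a} < #{x' | K x' ≤ K b} := fun {a b} h =>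
    card_lt_card <| (ssubset_iff_of_subset fun x hx =>
      mem_filter.2 ⟨mem_univ x, (mem_filter.1 hx).2.trans h.le⟩).2
      ⟨b, by simp, by simpa using h⟩
  intro a b hab
  by_contra hne
  rcases (hK.ne hne).lt_or_gt with h | h
  · exact (hlt h).ne hab
  · exact (hlt h).ne' hab

theorem exists_isGuessing_le_card_filter_le {𝒳 W : Type*} [Fintype 𝒳] (f : 𝒳 → W → ℕ) :
    ∃ G : 𝒳 → W → ℕ, IsGuessing G ∧ ∀ x w, G x w ≤ #{x' | f x' w ≤ f x w} := by
  let K : W → 𝒳 → ℕ ×ₗ Fin (Fintype.card 𝒳) := fun w x =>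
    toLex (f x w, Fintype.equivFin 𝒳 x)
  have hK : ∀ w, Function.Injective (K w) := fun w a b h =>
    (Fintype.equivFin 𝒳).injective (congrArg Prod.snd (toLex.injective h))
  refine ⟨fun x w => #{x' | K w x' ≤ K w x},
    fun w => ⟨injective_card_filter_le (hK w), fun x => ?_⟩, fun x w => card_le_card ?_⟩
  · exact mem_Icc.2 ⟨card_pos.2 ⟨x, by simp⟩, (card_filter_le _ _).trans_eq card_univ⟩
  · intro x' hx'
    exact mem_filter.2 ⟨mem_univ x', Prod.Lex.monotone_fst _ _ (mem_filter.1 hx').2⟩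

theorem IsGuessing.card_filter_le_le {𝒳 W : Type*} [Fintype 𝒳] {G : 𝒳 → W → ℕ}
    (hG : IsGuessing G) (w : W) (m : ℕ) : #{x | G x w ≤ m} ≤ m := by
  simpa using card_le_card_of_injOn (t := Icc 1 m) (G · w)
    (fun x hx => mem_Icc.2 ⟨(mem_Icc.1 ((hG w).2 x)).1, (mem_filter.1 hx).2⟩) (hG w).1.injOn

theorem IsGuessing.exists_isGuessing_fst_le_card_mul {𝒳 𝒴 𝒵 : Type*} [Fintype 𝒳] [Fintype 𝒵]
    [Nonempty 𝒵] {G : 𝒳 → 𝒴 × 𝒵 → ℕ} (hG : IsGuessing G) :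
    ∃ G' : 𝒳 → 𝒴 → ℕ, IsGuessing G' ∧ ∀ x y z, G' x y ≤ Fintype.card 𝒵 * G x (y, z) := by
  let m : 𝒳 → 𝒴 → ℕ := fun x y => univ.inf' univ_nonempty fun z => G x (y, z)
  obtain ⟨G', hG', hle⟩ := exists_isGuessing_le_card_filter_le m
  refine ⟨G', hG', fun x y z => (hle x y).trans ?_⟩
  calc #{x' | m x' y ≤ m x y}
      ≤ #(univ.biUnion fun z' => {x' | G x' (y, z') ≤ m x y}) :=
        card_le_card fun x' hx' => by
          obtain ⟨z', -, hz'⟩ := exists_mem_eq_inf' univ_nonempty fun z => G x' (y, z)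
          exact mem_biUnion.2
            ⟨z', mem_univ _, mem_filter.2 ⟨mem_univ _, hz' ▸ (mem_filter.1 hx').2⟩⟩
    _ ≤ ∑ z', #{x' | G x' (y, z') ≤ m x y} := card_biUnion_le
    _ ≤ ∑ _z' : 𝒵, m x y := sum_le_sum fun z' _ => hG.card_filter_le_le _ _
    _ = Fintype.card 𝒵 * m x y := by simp
    _ ≤ Fintype.card 𝒵 * G x (y, z) := Nat.mul_le_mul_left _ (inf'_le _ (mem_univ z))

theorem exists_isGuessing (𝒳 W : Type*) [Fintype 𝒳] : ∃ G : 𝒳 → W → ℕ, IsGuessing G :=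
  (exists_isGuessing_le_card_filter_le fun (_ : 𝒳) (_ : W) => 0).imp fun _ h => h.1

theorem IsGuessing.one_le {𝒳 W : Type*} [Fintype 𝒳] {G : 𝒳 → W → ℕ} (hG : IsGuessing G)
    (x : 𝒳) (w : W) : 1 ≤ G x w :=
  (mem_Icc.1 ((hG w).2 x)).1

theorem sum_mul_rpow_le_card_rpow_mul_sum {𝒳 𝒴 𝒵 : Type*}
    [Fintype 𝒳] [Fintype 𝒴] [Fintype 𝒵]
    {P : 𝒳 → 𝒴 → 𝒵 → ℝ} (hP : ∀ x y z, 0 ≤ P x y z) {ρ : ℝ} (hρ : 0 ≤ ρ)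
    {G' : 𝒳 → 𝒴 → ℕ} {G : 𝒳 → 𝒴 × 𝒵 → ℕ}
    (hle : ∀ x y z, G' x y ≤ Fintype.card 𝒵 * G x (y, z)) :
    ∑ x, ∑ y, ∑ z, P x y z * (G' x y : ℝ) ^ ρ ≤
      (Fintype.card 𝒵 : ℝ) ^ ρ * ∑ x, ∑ y, ∑ z, P x y z * (G x (y, z) : ℝ) ^ ρ := by
  simp only [mul_sum, ← mul_rpow (Nat.cast_nonneg (Fintype.card 𝒵)) (Nat.cast_nonneg _),
    mul_left_comm _ (P _ _ _)]
  gcongr with x _ y _ z _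
  · exact hP x y z
  · exact_mod_cast hle x y z

theorem sideInfo_improves_guessing_converse_general
    {𝒳 𝒴 𝒵 : Type*} [Fintype 𝒳] [Fintype 𝒴] [Fintype 𝒵]
    [Nonempty 𝒵]
    (ρ : ℝ) (hρ : 0 < ρ) (P : 𝒳 → 𝒴 → 𝒵 → ℝ)
    (hP : (∀ x y z, 0 ≤ P x y z) ∧ ∑ x, ∑ y, ∑ z, P x y z = 1) :
    max ((Fintype.card 𝒵 : ℝ) ^ (-ρ) *
        sInf { e | ∃ G : 𝒳 → 𝒴 → ℕ, IsGuessing G ∧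
          e = ∑ x, ∑ y, ∑ z, P x y z * (G x y : ℝ) ^ ρ }) 1 ≤
      sInf { e | ∃ G : 𝒳 → 𝒴 × 𝒵 → ℕ, IsGuessing G ∧
        e = ∑ x, ∑ y, ∑ z, P x y z * (G x (y, z) : ℝ) ^ ρ } := by
  obtain ⟨hP0, hP1⟩ := hP
  have hc : (0 : ℝ) < Fintype.card 𝒵 := by exact_mod_cast Fintype.card_pos
  obtain ⟨G₀, hG₀⟩ := exists_isGuessing 𝒳 (𝒴 × 𝒵)
  refine le_csInf ⟨_, G₀, hG₀, rfl⟩ ?_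
  rintro _ ⟨G, hG, rfl⟩
  refine max_le ?_ ?_
  · obtain ⟨G', hG', hle⟩ := hG.exists_isGuessing_fst_le_card_mul
    have hbdd : BddBelow { e | ∃ G : 𝒳 → 𝒴 → ℕ, IsGuessing G ∧
        e = ∑ x, ∑ y, ∑ z, P x y z * (G x y : ℝ) ^ ρ } := ⟨0, by
      rintro _ ⟨G, -, rfl⟩
      exact sum_nonneg fun x _ => sum_nonneg fun y _ => sum_nonneg fun z _ =>
        mul_nonneg (hP0 x y z) (by positivity)⟩
    calc (Fintype.card 𝒵 : ℝ) ^ (-ρ) * sInf _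
        ≤ (Fintype.card 𝒵 : ℝ) ^ (-ρ) *
          ((Fintype.card 𝒵 : ℝ) ^ ρ * ∑ x, ∑ y, ∑ z, P x y z * (G x (y, z) : ℝ) ^ ρ) := by
          gcongr
          exact (csInf_le hbdd ⟨G', hG', rfl⟩).trans
            (sum_mul_rpow_le_card_rpow_mul_sum hP0 hρ.le hle)
      _ = _ := by rw [rpow_neg hc.le, inv_mul_cancel_left₀ (rpow_pos_of_pos hc ρ).ne']
  · rw [← hP1]
    gcongr with x _ y _ z _
    exact le_mul_of_one_le_right (hP0 x y z)
      (one_le_rpow (by exact_mod_cast hG.one_le x (y, z)) hρ.le)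

theorem sideInfo_improves_guessing_converse
    {𝒳 𝒴 𝒵 : Type*} [Fintype 𝒳] [Fintype 𝒴] [Fintype 𝒵]
    [Nonempty 𝒳] [Nonempty 𝒴] [Nonempty 𝒵]
    (ρ : ℝ) (hρ : 0 < ρ) (P : 𝒳 → 𝒴 → 𝒵 → ℝ)
    (hP : (∀ x y z, 0 ≤ P x y z) ∧ ∑ x, ∑ y, ∑ z, P x y z = 1) :
    max ((Fintype.card 𝒵 : ℝ) ^ (-ρ) *
        sInf { e | ∃ G : 𝒳 → 𝒴 → ℕ, IsGuessing G ∧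
          e = ∑ x, ∑ y, ∑ z, P x y z * (G x y : ℝ) ^ ρ }) 1 ≤
      sInf { e | ∃ G : 𝒳 → 𝒴 × 𝒵 → ℕ, IsGuessing G ∧
        e = ∑ x, ∑ y, ∑ z, P x y z * (G x (y, z) : ℝ) ^ ρ } :=
  sideInfo_improves_guessing_converse_general ρ hρ P hP
end
end
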